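/- Let Γ and Λ be finite types, and let M be a Post–Turing machine (Turing.TM0.Machine Γ Λ) that halts on every input tape lying in the support of any of the distributions below. For each input tape x, let A(x) ∈ Finset (Λ × Γ) be the set of (state, head-symbol) pairs visited during M's (halting) run on x, and let (D_n)_{n≥1} be a sequence of probability mass functions on input tapes. Then for every ε, δ ∈ (0,1) there exist n₀ ∈ ℕ and m ∈ ℕ such that, drawing m independent samples from each of D_1, …, D_{n₀} and setting Â = the union of A(x) over all drawn samples x, with probability at least 1 − δ the following holds: for every n ≥ n₀, Pr_{x∼D_n}[Turing.TM0.eval M_Â x = Turing.TM0.eval M x] > 1 − ε, where M_Â is defined by M_Â q s = M q s if (q, s) ∈ Â and none otherwise. -/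

import Mathlib

open scoped ENNReal Classical

/-- The restriction of a Post–Turing machine `M` to a finite partial lookup table `Ahat` of
(state, symbol) pairs: it behaves like `M` on pairs in `Ahat` and halts otherwise. -/
noncomputable def restrictMachine {Γ Λ : Type*} [Inhabited Λ]
    (M : Turing.TM0.Machine Γ Λ) (Ahat : Finset (Λ × Γ)) : Turing.TM0.Machine Γ Λ :=
  fun q s => if (q, s) ∈ Ahat then M q s else none

/-!
There are only finitely many (state, symbol) pairs, so the pairs visited on inputs of positive
probability under some `D (i + 1)` form a finite set `S`. Each `k ∈ S` is visited with positive
probability `1 - q_k` under one fixed `D (i_k + 1)`, so `m` samples from it all miss `k` with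
probability `q_k ^ m`; by a union bound, for large `m` the table learned from `D 1, …, D n₀`
(with `n₀ > max i_k`) contains `S` with probability at least `1 - δ`. Once it does, the
restricted machine takes the same steps as `M` from every input in the support of any `D n`,
`n ≥ 1`, so it agrees with `M` almost surely, not just with probability `> 1 - ε`.
-/

namespace StateTransition

variable {σ : Type*} {f g : σ → Option σ} {a : σ}

theorem reaches_iff_of_forall_reaches_eq (h : ∀ c, Reaches f a c → g c = f c) {c : σ} :
    Reaches g a c ↔ Reaches f a c := by
  constructor
  · intro hc
    induction hc with
    | refl => exact .refl
    | tail _ hstep ih => exact ih.tail (h _ ih ▸ hstep)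
  · intro hc
    induction hc with
    | refl => exact .refl
    | tail hreach hstep ih => exact ih.tail ((h _ hreach).symm ▸ hstep)

theorem eval_eq_of_forall_reaches_eq (h : ∀ c, Reaches f a c → g c = f c) :
    eval g a = eval f a :=
  Part.ext fun b => by
    rw [mem_eval, mem_eval, reaches_iff_of_forall_reaches_eq h]
    exact and_congr_right fun hb => by rw [h b hb]

end StateTransition

section RestrictMachine

open Turing

variable {Γ Λ : Type*} [Inhabited Γ] [Inhabited Λ] {M : TM0.Machine Γ Λ} {Ahat : Finset (Λ × Γ)}

theorem step_restrictMachine_of_mem {c : TM0.Cfg Γ Λ} (hc : (c.q, c.Tape.head) ∈ Ahat) :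
    TM0.step (restrictMachine M Ahat) c = TM0.step M c := by
  obtain ⟨q, T⟩ := c
  simp only [TM0.step, restrictMachine, if_pos hc]

theorem eval_restrictMachine_eq {x : List Γ}
    (h : ∀ c, TM0.Reaches M (TM0.init x) c → (c.q, c.Tape.head) ∈ Ahat) :
    TM0.eval (restrictMachine M Ahat) x = TM0.eval M x := by
  unfold TM0.eval
  rw [StateTransition.eval_eq_of_forall_reaches_eq fun c hc => step_restrictMachine_of_mem (h c hc)]

end RestrictMachine

theorem ENNReal.tsum_fin_pi_prod :
    ∀ {n : ℕ} {β : Fin n → Type*} (w : ∀ i, β i → ℝ≥0∞),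
      ∑' f : (∀ i, β i), ∏ i, w i (f i) = ∏ i, ∑' b, w i b
  | 0, _, _ => by simp
  | n + 1, β, w => by
    rw [← (Fin.consEquiv β).tsum_eq, ENNReal.tsum_prod', Fin.prod_univ_succ]
    simp only [Fin.consEquiv_apply, Fin.prod_univ_succ, Fin.cons_zero, Fin.cons_succ,
      ENNReal.tsum_mul_left, ENNReal.tsum_mul_right]
    rw [ENNReal.tsum_fin_pi_prod]

theorem ENNReal.exists_sum_pow_lt {ι : Type*} {s : Finset ι} {q : ι → ℝ≥0∞}
    (hq : ∀ i ∈ s, q i < 1) {δ : ℝ≥0∞} (hδ : 0 < δ) : ∃ m : ℕ, ∑ i ∈ s, q i ^ m < δ := by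
  have hlim := tendsto_finsetSum s fun i hi =>
    ENNReal.tendsto_pow_atTop_nhds_zero_of_lt_one (hq i hi)
  rw [Finset.sum_const_zero] at hlim
  exact (hlim.eventually_lt_const hδ).exists

namespace PMF

variable {α : Type*}

theorem tsum_ite_eq_one (p : PMF α) {P : α → Prop} [DecidablePred P]
    (h : ∀ a ∈ p.support, P a) : ∑' a, (if P a then p a else 0) = 1 := by
  refine (tsum_congr fun a => ?_).trans p.tsum_coe
  by_cases ha : p a = 0
  · simp [ha]
  · exact if_pos (h a ha)

theorem toOuterMeasure_univ (p : PMF α) : p.toOuterMeasure Set.univ = 1 :=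
  (toOuterMeasure_apply_eq_one_iff _ _).2 (Set.subset_univ _)

theorem one_sub_toOuterMeasure_compl_le (p : PMF α) (s : Set α) :
    1 - p.toOuterMeasure sᶜ ≤ p.toOuterMeasure s := by
  rw [tsub_le_iff_right]
  calc 1 = p.toOuterMeasure (s ∪ sᶜ) := by
        rw [Set.union_compl_self, toOuterMeasure_univ]
    _ ≤ p.toOuterMeasure s + p.toOuterMeasure sᶜ := MeasureTheory.measure_union_le _ _

theorem toOuterMeasure_lt_one {p : PMF α} {s : Set α} {a : α} (ha : a ∈ p.support)
    (has : a ∉ s) : p.toOuterMeasure s < 1 :=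
  ((MeasureTheory.measure_mono (Set.subset_univ s)).trans_eq p.toOuterMeasure_univ).lt_of_ne
    fun h => has ((toOuterMeasure_apply_eq_one_iff p s).1 h ha)

variable {n : ℕ} {β : Fin n → Type*}

noncomputable def pi (p : ∀ i, PMF (β i)) : PMF (∀ i, β i) :=
  ⟨fun f => ∏ i, p i (f i), ENNReal.summable.hasSum_iff.2 <| by
    simp only [ENNReal.tsum_fin_pi_prod, PMF.tsum_coe, Finset.prod_const_one]⟩

theorem pi_apply (p : ∀ i, PMF (β i)) (f : ∀ i, β i) : pi p f = ∏ i, p i (f i) := rfl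

theorem toOuterMeasure_pi_univ_pi (p : ∀ i, PMF (β i)) (s : ∀ i, Set (β i)) :
    (pi p).toOuterMeasure (Set.univ.pi s) = ∏ i, (p i).toOuterMeasure (s i) := by
  simp only [toOuterMeasure_apply, ← ENNReal.tsum_fin_pi_prod]
  refine tsum_congr fun f => ?_
  by_cases hf : f ∈ Set.univ.pi s
  · rw [Set.indicator_of_mem hf, pi_apply]
    exact Finset.prod_congr rfl fun i _ => (Set.indicator_of_mem (hf i (Set.mem_univ i)) _).symm
  · obtain ⟨i, hi⟩ : ∃ i, f i ∉ s i := by simpa [Set.mem_univ_pi] using hf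
    rw [Set.indicator_of_notMem hf]
    exact (Finset.prod_eq_zero (Finset.mem_univ i) (Set.indicator_of_notMem hi _)).symm

theorem toOuterMeasure_pi_preimage_eval (p : ∀ i, PMF (β i)) (i : Fin n) (s : Set (β i)) :
    (pi p).toOuterMeasure (Function.eval i ⁻¹' s) = (p i).toOuterMeasure s := by
  rw [Set.eval_preimage, toOuterMeasure_pi_univ_pi, Finset.prod_eq_single i]
  · rw [Function.update_self]
  · intro j _ hj
    rw [Function.update_of_ne hj, toOuterMeasure_univ]
  · exact fun h => absurd (Finset.mem_univ i) h

end PMF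

section Sampling

open MeasureTheory

variable {α κ : Type*}

noncomputable def samplePMF (D : ℕ → PMF α) (n₀ m : ℕ) : PMF (Fin n₀ → Fin m → α) :=
  PMF.pi fun i => PMF.pi fun _ => D (i + 1)

def learnedTable [DecidableEq κ] {n₀ m : ℕ} (A : α → Finset κ) (xs : Fin n₀ → Fin m → α) :
    Finset κ :=
  Finset.univ.biUnion fun i => Finset.univ.biUnion fun j => A (xs i j)

theorem toOuterMeasure_samplePMF_forall_mem (D : ℕ → PMF α) {n₀ : ℕ} (m : ℕ) (i : Fin n₀)
    (s : Set α) :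
    (samplePMF D n₀ m).toOuterMeasure {xs | ∀ j, xs i j ∈ s} =
      (D (i + 1)).toOuterMeasure s ^ m := by
  have hbox : {xs : Fin n₀ → Fin m → α | ∀ j, xs i j ∈ s} =
      Function.eval i ⁻¹' Set.univ.pi fun _ => s := by
    ext xs
    simp
  rw [hbox, samplePMF, PMF.toOuterMeasure_pi_preimage_eval, PMF.toOuterMeasure_pi_univ_pi,
    Finset.prod_const, Finset.card_univ, Fintype.card_fin]

theorem mem_learnedTable [DecidableEq κ] {n₀ m : ℕ} {A : α → Finset κ}
    {xs : Fin n₀ → Fin m → α} {k : κ} {i : Fin n₀} {j : Fin m} (h : k ∈ A (xs i j)) :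
    k ∈ learnedTable A xs :=
  Finset.mem_biUnion.2 ⟨i, Finset.mem_univ i, Finset.mem_biUnion.2 ⟨j, Finset.mem_univ j, h⟩⟩

theorem one_sub_sum_pow_le_toOuterMeasure_subset_learnedTable [DecidableEq κ] (D : ℕ → PMF α)
    (A : α → Finset κ) {n₀ : ℕ} (m : ℕ) (S : Finset κ) (level : κ → Fin n₀) :
    1 - ∑ k ∈ S, (D (level k + 1)).toOuterMeasure {x | k ∉ A x} ^ m ≤
      (samplePMF D n₀ m).toOuterMeasure {xs | S ⊆ learnedTable A xs} := by
  set μ := (samplePMF D n₀ m).toOuterMeasure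
  set G := {xs | S ⊆ learnedTable A xs}
  have hbad : Gᶜ ⊆ ⋃ k ∈ S, {xs | ∀ j, xs (level k) j ∈ {x | k ∉ A x}} := by
    intro xs hxs
    obtain ⟨k, hkS, hk⟩ : ∃ k ∈ S, k ∉ learnedTable A xs := by
      simpa [G, Finset.not_subset] using hxs
    exact Set.mem_biUnion hkS fun j hj => hk (mem_learnedTable hj)
  have hbad_le : μ Gᶜ ≤ ∑ k ∈ S, (D (level k + 1)).toOuterMeasure {x | k ∉ A x} ^ m :=
    calc μ Gᶜ ≤ μ (⋃ k ∈ S, {xs | ∀ j, xs (level k) j ∈ {x | k ∉ A x}}) := measure_mono hbad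
      _ ≤ ∑ k ∈ S, μ {xs | ∀ j, xs (level k) j ∈ {x | k ∉ A x}} :=
          measure_biUnion_finset_le _ _
      _ = _ := by simp_rw [μ, toOuterMeasure_samplePMF_forall_mem]
  exact (tsub_le_tsub_left hbad_le 1).trans (PMF.one_sub_toOuterMeasure_compl_le _ _)

theorem exists_samplePMF_learnedTable_covers [Fintype κ] [DecidableEq κ] (D : ℕ → PMF α)
    (A : α → Finset κ) {δ : ℝ} (hδ : 0 < δ) :
    ∃ n₀ m : ℕ, 0 < n₀ ∧ ENNReal.ofReal (1 - δ) ≤ (samplePMF D n₀ m).toOuterMeasure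
      {xs | ∀ n, 0 < n → ∀ x ∈ (D n).support, A x ⊆ learnedTable A xs} := by
  set S : Finset κ := {k | ∃ i : ℕ, ∃ x ∈ (D (i + 1)).support, k ∈ A x}
  choose! lvl x hx hkx using fun k (hk : k ∈ S) => (Finset.mem_filter.1 hk).2
  let level (k : κ) : Fin (S.sup lvl + 1) :=
    ⟨min (lvl k) (S.sup lvl), Nat.lt_succ_of_le (min_le_right _ _)⟩
  have hmiss : ∀ k ∈ S, (D (level k + 1)).toOuterMeasure {x | k ∉ A x} < 1 := fun k hk => by
    rw [show (level k : ℕ) = lvl k from min_eq_left (S.le_sup hk)]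
    exact PMF.toOuterMeasure_lt_one (hx k hk) (not_not_intro (hkx k hk))
  obtain ⟨m, hm⟩ := ENNReal.exists_sum_pow_lt hmiss (ENNReal.ofReal_pos.2 hδ)
  refine ⟨S.sup lvl + 1, m, Nat.succ_pos _, ?_⟩
  calc ENNReal.ofReal (1 - δ) = 1 - ENNReal.ofReal δ := by
        rw [ENNReal.ofReal_sub _ hδ.le, ENNReal.ofReal_one]
    _ ≤ 1 - ∑ k ∈ S, (D (level k + 1)).toOuterMeasure {x | k ∉ A x} ^ m :=
        tsub_le_tsub_left hm.le 1
    _ ≤ _ := one_sub_sum_pow_le_toOuterMeasure_subset_learnedTable D A m S level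
    _ ≤ _ := by
      refine measure_mono fun xs hxs n hn y hy k hky => hxs ?_
      exact Finset.mem_filter.2 ⟨Finset.mem_univ k, n - 1, y, by rwa [Nat.sub_add_cancel hn], hky⟩

end Sampling

theorem restricted_machine_length_generalizes_general {Γ Λ : Type*} [Fintype Γ] [Fintype Λ]
    [Inhabited Γ] [Inhabited Λ]
    (M : Turing.TM0.Machine Γ Λ) (D : ℕ → PMF (List Γ))
    (A : List Γ → Finset (Λ × Γ))
    (hA : ∀ (x : List Γ) (p : Λ × Γ), p ∈ A x ↔
      ∃ c : Turing.TM0.Cfg Γ Λ, Turing.TM0.Reaches M (Turing.TM0.init x) c ∧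
        p = (c.q, c.Tape.head))
    (ε δ : ℝ) (hε : ε ∈ Set.Ioo (0 : ℝ) 1) (hδ : δ ∈ Set.Ioo (0 : ℝ) 1) :
    ∃ n₀ m : ℕ,
      ENNReal.ofReal (1 - δ) ≤
        ∑' xs : Fin n₀ → Fin m → List Γ,
          if ∀ n ≥ n₀, ENNReal.ofReal (1 - ε) <
              ∑' x, if Turing.TM0.eval
                    (restrictMachine M (Finset.univ.biUnion
                      (fun i : Fin n₀ => Finset.univ.biUnion fun j : Fin m => A (xs i j)))) x =
                  Turing.TM0.eval M x
                then D n x else 0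
          then ∏ i, ∏ j, D (i.1 + 1) (xs i j) else 0 := by
  obtain ⟨n₀, m, hn₀, hcover⟩ := exists_samplePMF_learnedTable_covers D A hδ.1
  refine ⟨n₀, m, hcover.trans ?_⟩
  rw [PMF.toOuterMeasure_apply]
  refine ENNReal.tsum_le_tsum fun xs => Set.indicator_apply_le'
    (fun hxs => (if_pos fun n hn => ?_).ge) fun _ => zero_le
  refine (ENNReal.ofReal_lt_one.2 (by linarith [hε.1])).trans_eq
    (PMF.tsum_ite_eq_one _ fun x hx => ?_).symm
  exact eval_restrictMachine_eq fun c hc =>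
    hxs n (hn₀.trans_le hn) x hx ((hA x _).2 ⟨c, hc, rfl⟩)

/-- Theorem 2 (core): let `M` be a Post–Turing machine over finite `Γ`, `Λ` halting on every
input tape in the support of each `D n`, and let `A x` be the set of (state, head-symbol)
pairs visited during the run of `M` on `x`. Then for all `ε, δ ∈ (0,1)` there are `n₀, m` such
that, drawing `m` independent samples from each of `D_1, …, D_{n₀}` and letting `Ahat` be the
union of the visited sets of the drawn samples, with probability at least `1 - δ` we have:
for every `n ≥ n₀`, the machine restricted to the lookup table `Ahat` computes the same output
as `M` with probability greater than `1 - ε` over `x ∼ D n`. -/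
theorem restricted_machine_length_generalizes {Γ Λ : Type*} [Fintype Γ] [Fintype Λ]
    [Inhabited Γ] [Inhabited Λ]
    (M : Turing.TM0.Machine Γ Λ) (D : ℕ → PMF (List Γ))
    (hhalt : ∀ n : ℕ, ∀ x ∈ (D n).support, (Turing.TM0.eval M x).Dom)
    (A : List Γ → Finset (Λ × Γ))
    (hA : ∀ (x : List Γ) (p : Λ × Γ), p ∈ A x ↔
      ∃ c : Turing.TM0.Cfg Γ Λ, Turing.TM0.Reaches M (Turing.TM0.init x) c ∧
        p = (c.q, c.Tape.head))
    (ε δ : ℝ) (hε : ε ∈ Set.Ioo (0 : ℝ) 1) (hδ : δ ∈ Set.Ioo (0 : ℝ) 1) :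
    ∃ n₀ m : ℕ,
      ENNReal.ofReal (1 - δ) ≤
        ∑' xs : Fin n₀ → Fin m → List Γ,
          if ∀ n ≥ n₀, ENNReal.ofReal (1 - ε) <
              ∑' x, if Turing.TM0.eval
                    (restrictMachine M (Finset.univ.biUnion
                      (fun i : Fin n₀ => Finset.univ.biUnion fun j : Fin m => A (xs i j)))) x =
                  Turing.TM0.eval M x
                then D n x else 0
          then ∏ i, ∏ j, D (i.1 + 1) (xs i j) else 0 :=
  restricted_machine_length_generalizes_general M D A hA ε δ hε hδ
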